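/- arXiv:1712.05020 — 10 statements merged into one kernel-verified Lean document; each statement's English description precedes it below -/
import Mathlib

section
/- For every natural number δ, d(δ, 2) = 2^(−δ) · (α^δ + γ^δ). -/
/-- `α = b + √(b² − 4b)`. -/
noncomputable def alpha (b : ℝ) : ℝ := b + Real.sqrt (b ^ 2 - 4 * b)

/-- `γ = b − √(b² − 4b)`. -/
noncomputable def gamma (b : ℝ) : ℝ := b - Real.sqrt (b ^ 2 - 4 * b)

/-- The recurrence `d(0,k) = k`, `d(1,k) = k·b − b`, `d(δ,k) = b·(d(δ−1,k) − d(δ−2,k))`. -/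
noncomputable def d (b k : ℝ) : ℕ → ℝ
  | 0 => k
  | 1 => k * b - b
  | (δ + 2) => b * (d b k (δ + 1) - d b k δ)

/-- `D(h,k) = Σ_{δ=0}^{h} d(δ,k)`. -/
noncomputable def D (b k : ℝ) (h : ℕ) : ℝ := ∑ δ ∈ Finset.range (h + 1), d b k δ

/-- Depthwise average degree: `d̄(0,k) = k`, `d̄(δ,k) = d(δ,k)/d(δ−1,k)` for `δ ≥ 1`. -/
noncomputable def dbar (b k : ℝ) : ℕ → ℝ
  | 0 => k
  | (δ + 1) => d b k (δ + 1) / d b k δ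

/-- Average degree: `D̄(0,k) = k`, `D̄(h,k) = D(h,k)/(D(h−1,k)+1)` for `h ≥ 1`. -/
noncomputable def Dbar (b k : ℝ) : ℕ → ℝ
  | 0 => k
  | (h + 1) => D b k (h + 1) / (D b k h + 1)

theorem stmt_1 (b : ℝ) (hb : b > 4) (δ : ℕ) :
    d b 2 δ = (2 : ℝ) ^ (-(δ : ℤ)) * (alpha b ^ δ + gamma b ^ δ) := by
  have hnn : (0:ℝ) ≤ b ^ 2 - 4 * b := by nlinarith
  have hs : Real.sqrt (b ^ 2 - 4 * b) ^ 2 = b ^ 2 - 4 * b := Real.sq_sqrt hnn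
  have ha : alpha b ^ 2 = 2 * b * alpha b - 4 * b := by
    simp only [alpha]; nlinarith [hs]
  have hg : gamma b ^ 2 = 2 * b * gamma b - 4 * b := by
    simp only [gamma]; nlinarith [hs]
  have hag : alpha b + gamma b = 2 * b := by simp only [alpha, gamma]; ring
  have key : ∀ n, d b 2 n = ((2:ℝ)⁻¹)^n * (alpha b ^ n + gamma b ^ n) := by
    intro n
    induction n using Nat.twoStepInduction with
    | zero => norm_num [d]
    | one =>
      show (2:ℝ) * b - b = (2:ℝ)⁻¹ ^ 1 * (alpha b ^ 1 + gamma b ^ 1)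
      rw [pow_one, pow_one, pow_one, hag]; ring
    | more n ih1 ih2 =>
      show b * (d b 2 (n+1) - d b 2 n) = _
      rw [ih1, ih2]
      have e1 : alpha b ^ (n+2) = alpha b ^ n * (2*b*alpha b - 4*b) := by rw [← ha]; ring
      have e2 : gamma b ^ (n+2) = gamma b ^ n * (2*b*gamma b - 4*b) := by rw [← hg]; ring
      rw [e1, e2]; ring
  rw [key δ, zpow_neg, zpow_natCast, inv_pow]
end

section
/- For every natural number h ≥ 3, (b/2)^h < d(h, 2) ≤ b^h. -/
lemma d_step (b k : ℝ) (n : ℕ) : d b k (n + 2) = b * (d b k (n + 1) - d b k n) := rfl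

lemma d_key (b : ℝ) (hb : b > 4) : ∀ δ, 0 < d b 2 δ ∧ 2 * d b 2 δ < d b 2 (δ + 1) := by
  intro δ
  induction δ with
  | zero => simp only [d]; constructor <;> nlinarith
  | succ n ih =>
    obtain ⟨h1, h2⟩ := ih
    refine ⟨by linarith, ?_⟩
    rw [d_step]
    nlinarith

lemma d_lower (b : ℝ) (hb : b > 4) : ∀ h, (b / 2) ^ h < d b 2 h := by
  intro h
  induction h with
  | zero => simp [d]
  | succ n ih =>
    obtain ⟨hp, hk⟩ := d_key b hb n
    match n, ih, hp, hk with
    | 0, _, _, _ => simp only [d]; nlinarith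
    | (m + 1), ih, hp, hk =>
      rw [d_step]
      obtain ⟨hp', hk'⟩ := d_key b hb m
      have hpow : (0:ℝ) < (b / 2) ^ (m + 1) := by positivity
      calc (b / 2) ^ (m + 2) = (b / 2) * (b / 2) ^ (m + 1) := by ring
        _ < (b / 2) * d b 2 (m + 1) := by nlinarith
        _ ≤ b * (d b 2 (m + 1) - d b 2 m) := by nlinarith
        _ = d b 2 (m + 2) := rfl

lemma d_upper (b : ℝ) (hb : b > 4) : ∀ h, d b 2 (h + 1) ≤ b ^ (h + 1) := by
  intro h
  induction h with
  | zero => simp [d]; nlinarith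
  | succ n ih =>
    obtain ⟨hp, _⟩ := d_key b hb n
    rw [d_step]
    have hbp : (0:ℝ) < b ^ (n + 1) := by positivity
    have := mul_le_mul_of_nonneg_left ih (show (0:ℝ) ≤ b by linarith)
    have := mul_pos (show (0:ℝ) < b by linarith) hp
    calc b * (d b 2 (n + 1) - d b 2 n) ≤ b * d b 2 (n + 1) := by nlinarith
      _ ≤ b * b ^ (n + 1) := by linarith
      _ = b ^ (n + 1 + 1) := by ring

theorem stmt_2 (b : ℝ) (hb : b > 4) (h : ℕ) (hh : 3 ≤ h) :
    (b / 2) ^ h < d b 2 h ∧ d b 2 h ≤ b ^ h := by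
  obtain ⟨m, rfl⟩ : ∃ m, h = m + 1 := ⟨h - 1, by omega⟩
  exact ⟨d_lower b hb (m + 1), d_upper b hb m⟩
end

section
/- For every real number k ≥ 2, the sequence δ ↦ d(δ, k) is positive and strictly increasing: for every natural number δ, 0 < d(δ, k) < d(δ+1, k). -/
theorem stmt_4 (b : ℝ) (hb : b > 4) (k : ℝ) (hk : 2 ≤ k) (δ : ℕ) :
    0 < d b k δ ∧ d b k δ < d b k (δ + 1) := by
  have key : ∀ n, 0 < d b k n ∧ 2 * d b k n ≤ d b k (n + 1) := by
    intro n
    induction n with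
    | zero =>
      constructor
      · simpa [d] using lt_of_lt_of_le (by norm_num) hk
      · show 2 * k ≤ k * b - b
        nlinarith
    | succ m ih =>
      obtain ⟨h1, h2⟩ := ih
      have h3 : 0 < d b k (m + 1) := lt_of_lt_of_le (by linarith) h2
      have h4 : d b k (m + 2) = b * (d b k (m + 1) - d b k m) := rfl
      constructor
      · exact h3
      · rw [h4]; nlinarith
  obtain ⟨h1, h2⟩ := key δ
  exact ⟨h1, lt_of_lt_of_le (by linarith) h2⟩
end

section
/- For every natural number δ and all real numbers k, k' with 2 ≤ k < k', d(δ, k) < d(δ, k'). -/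
lemma aux_mono (b : ℝ) (hb : b > 4) (k k' : ℝ) (hkk' : k < k') :
    ∀ δ : ℕ, 0 < d b k' δ - d b k δ ∧
      2 * (d b k' δ - d b k δ) ≤ d b k' (δ + 1) - d b k (δ + 1) := by
  intro δ
  induction δ with
  | zero =>
    constructor
    · simp [d]; linarith
    · simp only [d]; nlinarith
  | succ n ih =>
    obtain ⟨h1, h2⟩ := ih
    refine ⟨by linarith, ?_⟩
    have e : ∀ m : ℝ, d b m (n + 2) = b * (d b m (n + 1) - d b m n) := fun m => rfl
    rw [e, e]
    nlinarith

theorem stmt_5 (b : ℝ) (hb : b > 4) (δ : ℕ) (k k' : ℝ) (hk : 2 ≤ k) (hkk' : k < k') :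
    d b k δ < d b k' δ := by
  linarith [(aux_mono b hb k k' hkk' δ).1]
end

section
/- D(h, k) is strictly increasing in h and in k: for every real k ≥ 2 and every natural number h, D(h, k) < D(h+1, k); and for every natural number h and all real numbers k, k' with 2 ≤ k < k', D(h, k) < D(h, k'). -/
theorem stmt_7 (b : ℝ) (hb : b > 4) :
    (∀ (k : ℝ), 2 ≤ k → ∀ (h : ℕ), D b k h < D b k (h + 1)) ∧
    (∀ (h : ℕ) (k k' : ℝ), 2 ≤ k → k < k' → D b k h < D b k' h) := by
  have dpos : ∀ (k : ℝ), 2 ≤ k → ∀ δ, 0 < d b k δ ∧ 2 * d b k δ ≤ d b k (δ + 1) := by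
    intro k hk δ
    induction δ with
    | zero => constructor <;> simp [d] <;> nlinarith
    | succ n ih =>
      obtain ⟨h1, h2⟩ := ih
      have h3 : 0 < d b k (n + 1) := by linarith
      refine ⟨h3, ?_⟩
      have : d b k (n + 2) = b * (d b k (n + 1) - d b k n) := rfl
      rw [this]
      nlinarith
  have dmono : ∀ (k k' : ℝ), k < k' → ∀ δ,
      0 < d b k' δ - d b k δ ∧ 2 * (d b k' δ - d b k δ) ≤ d b k' (δ + 1) - d b k (δ + 1) := by
    intro k k' hkk δ
    induction δ with
    | zero => constructor <;> simp [d] <;> nlinarith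
    | succ n ih =>
      obtain ⟨h1, h2⟩ := ih
      have h3 : 0 < d b k' (n + 1) - d b k (n + 1) := by linarith
      refine ⟨h3, ?_⟩
      have e1 : d b k (n + 2) = b * (d b k (n + 1) - d b k n) := rfl
      have e2 : d b k' (n + 2) = b * (d b k' (n + 1) - d b k' n) := rfl
      rw [e1, e2]
      nlinarith
  constructor
  · intro k hk h
    have : 0 < d b k (h + 1) := (dpos k hk (h + 1)).1
    simp only [D, Finset.sum_range_succ]
    linarith [le_refl (∑ δ ∈ Finset.range (h + 1), d b k δ)]
  · intro h k k' hk hkk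
    unfold D
    apply Finset.sum_lt_sum_of_nonempty
    · exact Finset.nonempty_range_iff.mpr (Nat.succ_ne_zero h)
    · intro i _
      have := (dmono k k' hkk i).1
      linarith
end

section
/- For every real number k with 2 ≤ k ≤ b − 2 and every natural number δ, d̄(δ, k) < d̄(δ+1, k); that is, the depthwise average degree d̄(·, k) is strictly increasing in δ. -/
theorem stmt_8 (b : ℝ) (hb : b > 4) (k : ℝ) (hk2 : 2 ≤ k) (hkb : k ≤ b - 2) (δ : ℕ) :
    dbar b k δ < dbar b k (δ + 1) := by
  set s : ℝ := Real.sqrt (b ^ 2 - 4 * b) with hs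
  have hs2 : s ^ 2 = b ^ 2 - 4 * b := Real.sq_sqrt (by nlinarith)
  have hs0 : 0 ≤ s := Real.sqrt_nonneg _
  have hslt : b - 4 < s := by nlinarith
  have hsb : s < b := by nlinarith
  set q : ℝ := (b - s) / 2 with hq
  set c : ℝ := (b + s) / 2 with hc
  have hq0 : 0 < q := by simp only [hq]; linarith
  have hq2 : q < 2 := by simp only [hq]; linarith
  have hsum : q + c = b := by simp only [hq, hc]; ring
  have hprod : q * c = b := by simp only [hq, hc]; nlinarith
  have hkc : k < c := by simp only [hc]; linarith
  have hc0 : 0 < c := by linarith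
  have key : ∀ n, 0 < d b k n ∧ q * d b k n < d b k (n + 1) ∧
      d b k (n + 1) < c * d b k n := by
    intro n
    induction n with
    | zero =>
      refine ⟨by simp [d]; linarith, ?_, ?_⟩
      · show q * k < k * b - b
        nlinarith [mul_pos hq0 (by linarith : (0:ℝ) < k), (by nlinarith : (b-4)*(k-1) ≥ 0)]
      · show k * b - b < c * k
        nlinarith [mul_pos hq0 (by linarith : (0:ℝ) < c - k)]
    | succ n ih =>
      obtain ⟨h1, h2, h3⟩ := ih
      have hp : 0 < d b k (n + 1) := lt_trans (mul_pos hq0 h1) h2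
      have heq : d b k (n + 2) = b * (d b k (n + 1) - d b k n) := rfl
      refine ⟨hp, ?_, ?_⟩
      · rw [heq]; nlinarith [mul_pos hc0 (sub_pos.2 h2)]
      · rw [heq]; nlinarith [mul_pos hq0 (sub_pos.2 h3)]
  match δ with
  | 0 =>
    show k < (k * b - b) / k
    rw [lt_div_iff₀ (by linarith : (0:ℝ) < k)]
    nlinarith [(by nlinarith : (b - k - 2) * (k - 1) ≥ 0)]
  | (n + 1) =>
    obtain ⟨h1, h2, h3⟩ := key n
    obtain ⟨hp, h2', h3'⟩ := key (n + 1)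
    show d b k (n + 1) / d b k n < d b k (n + 2) / d b k (n + 1)
    rw [div_lt_div_iff₀ h1 hp]
    have heq : d b k (n + 2) = b * (d b k (n + 1) - d b k n) := rfl
    have expand : (d b k (n+1) - q * d b k n) * (c * d b k n - d b k (n+1)) =
        b * (d b k (n+1) - d b k n) * d b k n - d b k (n+1) * d b k (n+1) := by
      linear_combination (d b k (n+1) * d b k n) * hsum - (d b k n)^2 * hprod
    rw [heq]
    nlinarith [mul_pos (sub_pos.2 h2) (sub_pos.2 h3), expand]
end

section
/- For every real number k ≥ b − 1 and every natural number δ, d̄(δ+1, k) < d̄(δ, k); that is, the depthwise average degree d̄(·, k) is strictly decreasing in δ. -/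
theorem stmt_9 (b : ℝ) (hb : b > 4) (k : ℝ) (hk : b - 1 ≤ k) (δ : ℕ) :
    dbar b k (δ + 1) < dbar b k δ := by
  set s := Real.sqrt (b ^ 2 - 4 * b) with hs
  have hs0 : 0 ≤ s := Real.sqrt_nonneg _
  have hs2 : s ^ 2 = b ^ 2 - 4 * b := Real.sq_sqrt (by nlinarith)
  have hsb : s < b - 2 := by nlinarith
  -- invariant
  have main : ∀ n, 0 < d b k n ∧ (b + s) / 2 * d b k n < d b k (n + 1) := by
    intro n
    induction n with
    | zero =>
      constructor
      · show 0 < k; linarith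
      · show (b + s) / 2 * k < k * b - b
        nlinarith [mul_nonneg (sub_nonneg.2 hk) (show (0:ℝ) ≤ b - s by linarith),
          mul_pos (show (0:ℝ) < b - 2 - s by linarith) (show (0:ℝ) < b by linarith)]
    | succ m ih =>
      obtain ⟨hu, hlt⟩ := ih
      set u := d b k m with hud
      set v := d b k (m + 1) with hvd
      have hv : 0 < v := by nlinarith
      have hrec : d b k (m + 2) = b * (v - u) := rfl
      refine ⟨hv, ?_⟩
      rw [hrec]
      have h1 : (2 * v - (b + s) * u) * (b - s) > 0 :=
        mul_pos (by linarith) (by linarith)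
      nlinarith [h1, hs2, mul_pos hu hv]
  -- conclusion
  cases δ with
  | zero =>
    have h0 := (main 0).1
    have h1 := (main 0).2
    show (k * b - b) / k < k
    rw [div_lt_iff₀ (show (0:ℝ) < k from h0)]
    nlinarith [mul_pos (show (0:ℝ) < k - (b + s) / 2 by linarith)
      (show (0:ℝ) < k - (b - s) / 2 by nlinarith)]
  | succ p =>
    obtain ⟨hu, hlt1⟩ := main p
    obtain ⟨hv, hlt2⟩ := main (p + 1)
    set u := d b k p with hud
    set v := d b k (p + 1) with hvd
    show d b k (p + 2) / v < v / u
    rw [div_lt_div_iff₀ hv hu]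
    have hrec : d b k (p + 2) = b * (v - u) := rfl
    rw [hrec]
    have h1 : 0 < v - (b + s) / 2 * u := by linarith
    have h2 : 0 < v - (b - s) / 2 * u := by nlinarith
    have hs2u : s ^ 2 * u ^ 2 = (b ^ 2 - 4 * b) * u ^ 2 := by rw [hs2]
    nlinarith [mul_pos h1 h2, hs2u]
end

section
/- For every natural number δ and all real numbers k, k' with 2 ≤ k < k', d̄(δ, k) < d̄(δ, k'); that is, d̄(δ, k) is strictly increasing in k. -/
noncomputable def pp (b : ℝ) : ℕ → ℝ
  | 0 => 1
  | 1 => b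
  | (n + 2) => b * (pp b (n + 1) - pp b n)

noncomputable def qq (b : ℝ) : ℕ → ℝ
  | 0 => 0
  | 1 => -b
  | (n + 2) => b * (qq b (n + 1) - qq b n)

lemma d_lin (b k : ℝ) : ∀ n, d b k n = pp b n * k + qq b n ∧
    d b k (n + 1) = pp b (n + 1) * k + qq b (n + 1) := by
  intro n
  induction n with
  | zero => simp [d, pp, qq]; ring
  | succ m ih =>
    refine ⟨ih.2, ?_⟩
    show d b k (m + 2) = pp b (m + 2) * k + qq b (m + 2)
    rw [d, pp, qq, ih.1, ih.2]; ring

lemma wronskian (b : ℝ) : ∀ n, pp b (n + 1) * qq b n - pp b n * qq b (n + 1) = b ^ (n + 1) := by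
  intro n
  induction n with
  | zero => simp [pp, qq]
  | succ m ih =>
    show pp b (m + 2) * qq b (m + 1) - pp b (m + 1) * qq b (m + 2) = b ^ (m + 2)
    rw [pp, qq, pow_succ]
    linear_combination b * ih

lemma d_pos (b k : ℝ) (hb : b > 4) (hk : 2 ≤ k) :
    ∀ n, 0 < d b k n ∧ 2 * d b k n ≤ d b k (n + 1) := by
  intro n
  induction n with
  | zero =>
    constructor
    · show (0:ℝ) < k; linarith
    · show 2 * k ≤ k * b - b; nlinarith
  | succ m ih =>
    obtain ⟨h1, h2⟩ := ih
    have h3 : 0 < d b k (m + 1) := by linarith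
    refine ⟨h3, ?_⟩
    show 2 * d b k (m + 1) ≤ b * (d b k (m + 1) - d b k m)
    nlinarith

theorem stmt_10 (b : ℝ) (hb : b > 4) (δ : ℕ) (k k' : ℝ) (hk : 2 ≤ k) (hkk' : k < k') :
    dbar b k δ < dbar b k' δ := by
  cases δ with
  | zero => exact hkk'
  | succ n =>
    have hk' : 2 ≤ k' := by linarith
    have hpk := d_pos b k hb hk
    have hpk' := d_pos b k' hb hk'
    show d b k (n + 1) / d b k n < d b k' (n + 1) / d b k' n
    rw [div_lt_div_iff₀ (hpk n).1 (hpk' n).1]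
    obtain ⟨e1, e2⟩ := d_lin b k n
    obtain ⟨f1, f2⟩ := d_lin b k' n
    rw [e1, e2, f1, f2]
    have hw := wronskian b n
    have hbp : (0:ℝ) < b ^ (n + 1) := by positivity
    nlinarith [hw, hbp, hkk']
end

section
/- If b ≥ 5, then for every real number k ≥ 2 and every natural number h ≥ 3, D̄(h, k) > b − 2. -/
lemma D_succ_closed (b k : ℝ) : ∀ h : ℕ, D b k (h + 1) = b * d b k h + k - b := by
  intro h
  induction h with
  | zero => simp [D, Finset.sum_range_succ, d]; ring
  | succ n ih =>
      have : D b k (n + 2) = D b k (n + 1) + d b k (n + 2) := by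
        simp [D, Finset.sum_range_succ]
      rw [this, ih, show d b k (n + 2) = b * (d b k (n + 1) - d b k n) from rfl]
      ring

lemma d_key_s13 (b k : ℝ) (hb5 : 5 ≤ b) (hk : 2 ≤ k) :
    ∀ δ : ℕ, b ≤ d b k (δ + 1) ∧
      d b k (δ + 2) ≥ (b - 2) * d b k (δ + 1) + b * (k - 2) := by
  intro δ
  induction δ with
  | zero =>
      constructor
      · show b ≤ k * b - b
        nlinarith
      · show b * ((k * b - b) - k) ≥ (b - 2) * (k * b - b) + b * (k - 2)
        nlinarith
  | succ n ih =>
      obtain ⟨h1, h2⟩ := ih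
      have hpos : b ≤ d b k (n + 2) := by nlinarith
      refine ⟨hpos, ?_⟩
      show b * (d b k (n + 2) - d b k (n + 1)) ≥ (b - 2) * d b k (n + 2) + b * (k - 2)
      nlinarith

theorem stmt_13 (b : ℝ) (hb : b > 4) (hb5 : 5 ≤ b) (k : ℝ) (hk : 2 ≤ k)
    (h : ℕ) (hh : 3 ≤ h) :
    Dbar b k h > b - 2 := by
  obtain ⟨n, rfl⟩ : ∃ n, h = n + 3 := ⟨h - 3, by omega⟩
  obtain ⟨h1, h2⟩ := d_key_s13 b k hb5 hk n
  show D b k (n + 3) / (D b k (n + 2) + 1) > b - 2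
  rw [show n + 3 = (n + 2) + 1 from rfl, D_succ_closed,
      show n + 2 = (n + 1) + 1 from rfl, D_succ_closed]
  have hden : 0 < b * d b k (n + 1) + k - b + 1 := by nlinarith
  rw [gt_iff_lt, lt_div_iff₀ hden, show n + 1 + 1 = n + 2 from rfl]
  nlinarith [mul_le_mul_of_nonneg_left h2 (show (0:ℝ) ≤ b by linarith),
    mul_le_mul_of_nonneg_left hk (show (0:ℝ) ≤ b ^ 2 - b + 3 by nlinarith)]
end

section
/- If b ≥ 5, then for every natural number h ≥ 1, 2^(h−1) + γ^h < α^h. -/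
lemma aux245 (n : ℕ) : (2 : ℝ) ^ n + 4 ^ (n + 1) ≤ 5 ^ (n + 1) := by
  induction n with
  | zero => norm_num
  | succ n ih =>
      have h2 : (0:ℝ) ≤ 2 ^ n := by positivity
      have h4 : (0:ℝ) ≤ 4 ^ (n+1) := by positivity
      calc (2:ℝ) ^ (n+1) + 4 ^ (n+2) ≤ 5 * (2 ^ n + 4 ^ (n+1)) := by ring_nf; nlinarith [pow_nonneg (show (0:ℝ) ≤ 4 by norm_num) n]
        _ ≤ 5 * 5 ^ (n+1) := by linarith
        _ = 5 ^ (n+2) := by ring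

theorem stmt_16 (b : ℝ) (hb : b > 4) (hb5 : 5 ≤ b) (h : ℕ) (hh : 1 ≤ h) :
    (2 : ℝ) ^ (h - 1) + gamma b ^ h < alpha b ^ h := by
  obtain ⟨n, rfl⟩ : ∃ n, h = n + 1 := ⟨h - 1, (Nat.succ_pred_eq_of_pos hh).symm⟩
  have hnn : (0:ℝ) ≤ b ^ 2 - 4 * b := by nlinarith
  have hsq : Real.sqrt (b ^ 2 - 4 * b) ^ 2 = b ^ 2 - 4 * b := Real.sq_sqrt hnn
  have hsnn : 0 ≤ Real.sqrt (b ^ 2 - 4 * b) := Real.sqrt_nonneg _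
  have hγ4 : gamma b < 4 := by
    have : b - 4 < Real.sqrt (b ^ 2 - 4 * b) := by
      rw [show b - 4 = Real.sqrt ((b-4)^2) from (Real.sqrt_sq (by linarith)).symm]
      exact Real.sqrt_lt_sqrt (by positivity) (by nlinarith)
    simp only [gamma]; linarith
  have hγ0 : 0 ≤ gamma b := by
    have : Real.sqrt (b ^ 2 - 4 * b) ≤ b := by nlinarith
    simp only [gamma]; linarith
  have hγ : gamma b ^ (n+1) < 4 ^ (n+1) :=
    pow_lt_pow_left₀ hγ4 hγ0 (Nat.succ_ne_zero n)
  have hα : (5:ℝ) ^ (n+1) ≤ alpha b ^ (n+1) := by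
    apply pow_le_pow_left₀ (by norm_num)
    simp only [alpha]; linarith
  have := aux245 n
  simp only [Nat.add_sub_cancel]
  linarith
end
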